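/- arXiv:1008.1462 — 2 statements merged into one kernel-verified Lean document; each statement's English description precedes it below -/
import Mathlib

section
/- In the Iwahori–Hecke algebra of S_n, for a multicomposition ν of n and a row standard ν-tableau v: x_ν T_{d(v)} T_i equals ξ x_ν T_{d(v)} if v s_i is not row standard; x_ν T_{d(v) s_i} if v ⊳ v s_i is row standard; and ξ x_ν T_{d(v) s_i} + (ξ − 1) x_ν T_{d(v)} if v s_i is row standard and v s_i ⊳ v. -/
open scoped Classical

noncomputable section

namespace SpechtInduction

/-- A node `(l, r, c)`: component `l`, row `r`, column `c` (all 0-indexed). -/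
abbrev Node : Type := ℕ × ℕ × ℕ

/-- A multicomposition of `n` with `ℓ` components, each a list of row lengths. -/
structure Multicomp (ℓ n : ℕ) where
  parts : List (List ℕ)
  len_eq : parts.length = ℓ
  size_eq : (parts.map List.sum).sum = n

namespace Multicomp

variable {ℓ n : ℕ}

def rowLen (μ : Multicomp ℓ n) (l r : ℕ) : ℕ := (μ.parts.getD l []).getD r 0

def mem (μ : Multicomp ℓ n) (x : Node) : Prop := x.2.2 < μ.rowLen x.1 x.2.1

def compSize (μ : Multicomp ℓ n) (l : ℕ) : ℕ := (μ.parts.getD l []).sum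

/-- The partial sums appearing in the dominance order. -/
def psum (μ : Multicomp ℓ n) (l i : ℕ) : ℕ :=
  (∑ k ∈ Finset.range l, μ.compSize k) + ∑ j ∈ Finset.range i, μ.rowLen l j

/-- The dominance order `lam ⊵ mu` on multicompositions. -/
def Dominates (lam mu : Multicomp ℓ n) : Prop := ∀ l i, mu.psum l i ≤ lam.psum l i

/-- Each component is a (weakly decreasing) partition. -/
def IsMultipartition (μ : Multicomp ℓ n) : Prop := ∀ l r, μ.rowLen l (r+1) ≤ μ.rowLen l r

end Multicomp

/-- A `μ`-tableau, recorded by the position function sending each entry `k ∈ {1,…,n}`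
to the node it occupies: a bijection onto the diagram of `μ`. -/
def IsTableau {ℓ n : ℕ} (μ : Multicomp ℓ n) (pos : ℕ → Node) : Prop :=
  (∀ j k, 1 ≤ j → j ≤ n → 1 ≤ k → k ≤ n → pos j = pos k → j = k) ∧
  (∀ k, 1 ≤ k → k ≤ n → μ.mem (pos k)) ∧
  (∀ x, μ.mem x → ∃ k, 1 ≤ k ∧ k ≤ n ∧ pos k = x)

/-- Row standard: entries increase along the rows. -/
def RowStandard {ℓ n : ℕ} (μ : Multicomp ℓ n) (pos : ℕ → Node) : Prop :=
  IsTableau μ pos ∧ ∀ j k, 1 ≤ j → j ≤ n → 1 ≤ k → k ≤ n →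
    (pos j).1 = (pos k).1 → (pos j).2.1 = (pos k).2.1 → (pos j).2.2 < (pos k).2.2 → j < k

/-- Column standard (= conjugate is row standard): entries increase down the columns. -/
def ColStandard {ℓ n : ℕ} (μ : Multicomp ℓ n) (pos : ℕ → Node) : Prop :=
  IsTableau μ pos ∧ ∀ j k, 1 ≤ j → j ≤ n → 1 ≤ k → k ≤ n →
    (pos j).1 = (pos k).1 → (pos j).2.2 = (pos k).2.2 → (pos j).2.1 < (pos k).2.1 → j < k

/-- Standard tableau: the tableau and its conjugate are both row standard. -/
def StandardTab {ℓ n : ℕ} (μ : Multicomp ℓ n) (pos : ℕ → Node) : Prop :=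
  RowStandard μ pos ∧ ColStandard μ pos

/-- Number of entries `≤ m` lying in row `(l,r)`. -/
def cnt (pos : ℕ → Node) (m l r : ℕ) : ℕ :=
  ((Finset.Icc 1 m).filter fun k => (pos k).1 = l ∧ (pos k).2.1 = r).card

/-- Number of entries `≤ m` lying in column `c` of component `l`. -/
def ccnt (pos : ℕ → Node) (m l c : ℕ) : ℕ :=
  ((Finset.Icc 1 m).filter fun k => (pos k).1 = l ∧ (pos k).2.2 = c).card

/-- Number of entries `≤ m` lying in component `l`. -/
def compcnt (pos : ℕ → Node) (m l : ℕ) : ℕ :=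
  ((Finset.Icc 1 m).filter fun k => (pos k).1 = l).card

/-- Dominance partial sums of the shape `Shape(t_m)` of the subtableau on entries `1,…,m`. -/
def tabPsum (pos : ℕ → Node) (m l i : ℕ) : ℕ :=
  (∑ k ∈ Finset.range l, compcnt pos m k) + ∑ j ∈ Finset.range i, cnt pos m l j

/-- Dominance order `s ⊵ t` on tableaux with `n` entries:
`Shape(s_m) ⊵ Shape(t_m)` for all `1 ≤ m ≤ n`. -/
def TabDominates (n : ℕ) (s t : ℕ → Node) : Prop :=
  ∀ m l i, 1 ≤ m → m ≤ n → tabPsum t m l i ≤ tabPsum s m l i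

/-- Dominance partial sums of the shape of the *conjugate* of the subtableau `pos_m`,
for a tableau with `ℓ` components (components get reversed, rows and columns swapped). -/
def conjPsum (ℓ : ℕ) (pos : ℕ → Node) (m l i : ℕ) : ℕ :=
  (∑ k ∈ Finset.range l, compcnt pos m (ℓ - 1 - k)) +
    ∑ j ∈ Finset.range i, ccnt pos m (ℓ - 1 - l) j

/-- `t' ⊵ s'`: the conjugate of `t` dominates the conjugate of `s`. -/
def ConjTabDominates (ℓ n : ℕ) (t s : ℕ → Node) : Prop :=
  ∀ m l i, 1 ≤ m → m ≤ n → conjPsum ℓ s m l i ≤ conjPsum ℓ t m l i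

/-- `u' ⊵ t`: the conjugate of `u` dominates `t`. -/
def ConjDomTab (ℓ n : ℕ) (u t : ℕ → Node) : Prop :=
  ∀ m l i, 1 ≤ m → m ≤ n → tabPsum t m l i ≤ conjPsum ℓ u m l i

/-- Lexicographic (row reading) order on nodes: by component, then row, then column. -/
def nodeLex (x y : Node) : Prop :=
  x.1 < y.1 ∨ (x.1 = y.1 ∧ (x.2.1 < y.2.1 ∨ (x.2.1 = y.2.1 ∧ x.2.2 < y.2.2)))

/-- `pos` is the row-reading tableau `t^μ` of `μ`: entries filled in order along
the rows of each component in turn. -/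
def IsRowReading {ℓ n : ℕ} (μ : Multicomp ℓ n) (pos : ℕ → Node) : Prop :=
  IsTableau μ pos ∧ ∀ j k, 1 ≤ j → j ≤ n → 1 ≤ k → k ≤ n → (j < k ↔ nodeLex (pos j) (pos k))

/-- Column reading order on nodes: components from last to first, then columns, then rows. -/
def nodeColLex (x y : Node) : Prop :=
  y.1 < x.1 ∨ (x.1 = y.1 ∧ (x.2.2 < y.2.2 ∨ (x.2.2 = y.2.2 ∧ x.2.1 < y.2.1)))

/-- `pos` is the column-reading tableau `t_μ` of `μ`: entries filled in order down the
columns, from the last component to the first. -/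
def IsColReading {ℓ n : ℕ} (μ : Multicomp ℓ n) (pos : ℕ → Node) : Prop :=
  IsTableau μ pos ∧ ∀ j k, 1 ≤ j → j ≤ n → 1 ≤ k → k ≤ n → (j < k ↔ nodeColLex (pos j) (pos k))

/-- `w` lies in the "symmetric group on `{a,…,b}`": it fixes every point outside `[a,b]`. -/
def FixesOutside (w : Equiv.Perm ℕ) (a b : ℕ) : Prop := ∀ k, k < a ∨ b < k → w k = k

/-- Coxeter length of a permutation of `{1,…,n}`, as the number of inversions. -/
def permLength (n : ℕ) (w : Equiv.Perm ℕ) : ℕ :=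
  (((Finset.Icc 1 n) ×ˢ (Finset.Icc 1 n)).filter fun p => p.1 < p.2 ∧ w p.2 < w p.1).card

/-- Right action of a permutation on a tableau (position function). -/
def actTab (pos : ℕ → Node) (w : Equiv.Perm ℕ) : ℕ → Node := fun k => pos (w k)

/-- `d` is the permutation `d(pos)` with `pos = tpos · d`, `tpos` the reference tableau. -/
def IsDPerm (n : ℕ) (tpos pos : ℕ → Node) (d : Equiv.Perm ℕ) : Prop :=
  FixesOutside d 1 n ∧ ∀ k, 1 ≤ k → k ≤ n → pos k = tpos (d k)

/-- The simple transposition `s_i = (i, i+1)`. -/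
def swapP (i : ℕ) : Equiv.Perm ℕ := Equiv.swap i (i + 1)

/-- The product `s_{i₁} ⋯ s_{i_k}` of a word in the Coxeter generators. -/
def wordProd (L : List ℕ) : Equiv.Perm ℕ := (L.map swapP).prod

/-- A reduced word for its product, using generators `s_1,…,s_{n-1}`. -/
def IsReducedWord (n : ℕ) (L : List ℕ) : Prop :=
  (∀ i ∈ L, 1 ≤ i ∧ i < n) ∧ L.length = permLength n (wordProd L)

/-- Bruhat order on `S_n`: some reduced expression of `u` is a subexpression of some
reduced expression of `w`. -/
def BruhatLE (n : ℕ) (u w : Equiv.Perm ℕ) : Prop :=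
  ∃ ww uw : List ℕ, IsReducedWord n ww ∧ wordProd ww = w ∧
    uw.Sublist ww ∧ IsReducedWord n uw ∧ wordProd uw = u

/-- Membership in the Young subgroup `S_μ`: `w` fixes `[1,n]` setwise, preserving each
row of the reference row-reading tableau `tpos = t^μ`. -/
def YoungMem (n : ℕ) (tpos : ℕ → Node) (w : Equiv.Perm ℕ) : Prop :=
  FixesOutside w 1 n ∧ ∀ k, 1 ≤ k → k ≤ n →
    (tpos (w k)).1 = (tpos k).1 ∧ (tpos (w k)).2.1 = (tpos k).2.1

/-- `accSize μ k = |μ^(1)| + ⋯ + |μ^(k)|`. -/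
def accSize {ℓ n : ℕ} (μ : Multicomp ℓ n) (k : ℕ) : ℕ := ∑ j ∈ Finset.range k, μ.compSize j

/-- The content of a node, with `ξinv` a fixed inverse of `ξ`:
`ξ^(c-r) Q_l` if `ξ ≠ 1` and `c - r + Q_l` if `ξ = 1`. -/
def contOfR {R : Type*} [CommRing R] (ξ ξinv : R) (Q : ℕ → R) (x : Node) : R :=
  if ξ = 1 then ((x.2.2 : R) - (x.2.1 : R)) + Q (x.1 + 1)
  else ξ ^ x.2.2 * ξinv ^ x.2.1 * Q (x.1 + 1)

/-- The set of contents `cont_s(k)` as `s` ranges over all standard tableaux of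
multipartitions of `n`. -/
def ContSet (ℓ n : ℕ) {R : Type*} [CommRing R] (ξ ξinv : R) (Q : ℕ → R) (k : ℕ) : Set R :=
  {c | ∃ (μ : Multicomp ℓ n) (pos : ℕ → Node), μ.IsMultipartition ∧ StandardTab μ pos ∧
        c = contOfR ξ ξinv Q (pos k)}

/-- The cyclotomic Hecke algebra of type `G(ℓ,1,n)`: an `R`-algebra `A` equipped with
generators satisfying the defining relations, together with the elements `T_w` and the
`*` anti-involution fixing the generators. -/
structure Hecke (R : Type*) [CommRing R] (A : Type*) [Ring A] [Algebra R A]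
    (n ℓ : ℕ) (ξ : R) (Q : ℕ → R) where
  L : ℕ → A
  T : ℕ → A
  Tw : Equiv.Perm ℕ → A
  star : A →ₗ[R] A
  cyclotomic : ((List.range ℓ).map fun k => L 1 - algebraMap R A (Q (k + 1))).prod = 0
  LL : ∀ r t, L r * L t = L t * L r
  quad : ∀ r, 1 ≤ r → r < n → (T r + 1) * (T r - algebraMap R A ξ) = 0
  TL : ∀ r, 1 ≤ r → r < n →
      T r * L r + (if ξ = 1 then 1 else 0) = L (r + 1) * (T r - algebraMap R A ξ + 1)
  braid : ∀ s, 1 ≤ s → s + 1 < n → T s * T (s + 1) * T s = T (s + 1) * T s * T (s + 1)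
  TLfar : ∀ r t, 1 ≤ r → r < n → t ≠ r → t ≠ r + 1 → T r * L t = L t * T r
  TTfar : ∀ r s, 1 ≤ r → r < n → 1 ≤ s → s < n → (r + 1 < s ∨ s + 1 < r) →
      T r * T s = T s * T r
  Tw_one : Tw 1 = 1
  Tw_mul : ∀ w i, 1 ≤ i → i < n → permLength n w < permLength n (w * swapP i) →
      Tw (w * swapP i) = Tw w * T i
  star_mul : ∀ a b, star (a * b) = star b * star a
  star_one : star 1 = 1
  star_L : ∀ r, star (L r) = L r
  star_T : ∀ r, star (T r) = T r

namespace Hecke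

variable {R : Type*} [CommRing R] {A : Type*} [Ring A] [Algebra R A]
  {n ℓ : ℕ} {ξ : R} {Q : ℕ → R}

/-- `x_μ = Σ_{w ∈ S_μ} T_w`, where `tpos = t^μ`. -/
def xElt (h : Hecke R A n ℓ ξ Q) (tpos : ℕ → Node) : A :=
  ∑ᶠ (w : Equiv.Perm ℕ) (_ : YoungMem n tpos w), h.Tw w

/-- `y_μ = Σ_{w ∈ S_μ} (-ξ)^{-ℓ(w)} T_w`. -/
def yElt (h : Hecke R A n ℓ ξ Q) (ξinv : R) (tpos : ℕ → Node) : A :=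
  ∑ᶠ (w : Equiv.Perm ℕ) (_ : YoungMem n tpos w), ((-ξinv) ^ permLength n w) • h.Tw w

/-- `u⁺_μ = Π_{k=2}^{ℓ} Π_{m=1}^{|μ^(1)|+⋯+|μ^(k-1)|} (L_m - Q_k)`. -/
def uPlus (h : Hecke R A n ℓ ξ Q) (μ : Multicomp ℓ n) : A :=
  ((List.range' 2 (ℓ - 1)).map fun k =>
    ((List.range' 1 (accSize μ (k - 1))).map fun m => h.L m - algebraMap R A (Q k)).prod).prod

/-- `u⁻_μ = Π_{k=1}^{ℓ-1} Π_{m=1}^{|μ^(1)|+⋯+|μ^(ℓ-k+1)|} (L_m - Q_k)`. -/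
def uMinus (h : Hecke R A n ℓ ξ Q) (μ : Multicomp ℓ n) : A :=
  ((List.range' 1 (ℓ - 1)).map fun k =>
    ((List.range' 1 (accSize μ (ℓ - k + 1))).map fun m => h.L m - algebraMap R A (Q k)).prod).prod

/-- `m_μ = u⁺_μ x_μ` (here `tpos = t^μ`). -/
def mmu (h : Hecke R A n ℓ ξ Q) (μ : Multicomp ℓ n) (tpos : ℕ → Node) : A :=
  h.uPlus μ * h.xElt tpos

/-- `n_μ = u⁻_μ y_μ`. -/
def nmu (h : Hecke R A n ℓ ξ Q) (ξinv : R) (μ : Multicomp ℓ n) (tpos : ℕ → Node) : A :=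
  h.uMinus μ * h.yElt ξinv tpos

/-- The Murphy basis element `m_{st} = T_{d(s)}^* m_μ T_{d(t)}`. -/
def mst (h : Hecke R A n ℓ ξ Q) (μ : Multicomp ℓ n) (tpos : ℕ → Node)
    (ds dt : Equiv.Perm ℕ) : A :=
  h.star (h.Tw ds) * h.mmu μ tpos * h.Tw dt

/-- The dual Murphy basis element `n_{st} = T_{d(s)}^* n_μ T_{d(t)}`. -/
def nst (h : Hecke R A n ℓ ξ Q) (ξinv : R) (μ : Multicomp ℓ n) (tpos : ℕ → Node)
    (ds dt : Equiv.Perm ℕ) : A :=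
  h.star (h.Tw ds) * h.nmu ξinv μ tpos * h.Tw dt

end Hecke

/-- The element `F_t = Π_{k=1}^n Π_{c ∈ contents, c ≠ cont_t(k)}
`(L_k - c)/(cont_t(k) - c)` of the split semisimple cyclotomic Hecke algebra. -/
def Ftab {K : Type*} [Field K] {A : Type*} [Ring A] [Algebra K A] {n ℓ : ℕ} {ξ : K}
    {Q : ℕ → K} (h : Hecke K A n ℓ ξ Q)
    (hfin : ∀ k, (ContSet ℓ n ξ ξ⁻¹ Q k).Finite) (t : ℕ → Node) : A :=
  ((List.range n).map fun k0 =>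
    Finset.noncommProd
      (((hfin (k0 + 1)).toFinset).filter fun c => c ≠ contOfR ξ ξ⁻¹ Q (t (k0 + 1)))
      (fun c => algebraMap K A ((contOfR ξ ξ⁻¹ Q (t (k0 + 1)) - c)⁻¹) *
        (h.L (k0 + 1) - algebraMap K A c))
      (by
        intro a _ b _ _
        have hc : ∀ (r : K) (z : A), Commute (algebraMap K A r) z := fun r z =>
          Algebra.commutes r z
        have c1 : Commute (h.L (k0 + 1) - algebraMap K A a)
            (h.L (k0 + 1) - algebraMap K A b) :=
          Commute.sub_left ((Commute.refl (h.L (k0 + 1))).sub_right ((hc b _).symm))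
            (hc a _)
        exact Commute.mul_left (hc _ _)
          (Commute.mul_right ((hc _ _).symm) c1)
        )).prod

/-- The seminormal basis element `f_{st} = F_s m_{st} F_t`.  Here `tpos = t^μ` and
`ds, dt` are the permutations with `s = t^μ d(s)`, `t = t^μ d(t)`. -/
def fElt {K : Type*} [Field K] {A : Type*} [Ring A] [Algebra K A] {n ℓ : ℕ} {ξ : K}
    {Q : ℕ → K} (h : Hecke K A n ℓ ξ Q)
    (hfin : ∀ k, (ContSet ℓ n ξ ξ⁻¹ Q k).Finite) (μ : Multicomp ℓ n)
    (tpos spos tpos' : ℕ → Node) (ds dt : Equiv.Perm ℕ) : A :=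
  Ftab h hfin spos * h.mst μ tpos ds dt * Ftab h hfin tpos'

/-- Semisimplicity of the cyclotomic Hecke algebra, in the equivalent combinatorial form:
contents separate standard tableaux. -/
def SeparatedContents (ℓ n : ℕ) {R : Type*} [CommRing R] (ξ ξinv : R) (Q : ℕ → R) : Prop :=
  ∀ (μ ν : Multicomp ℓ n) (s t : ℕ → Node), μ.IsMultipartition → ν.IsMultipartition →
    StandardTab μ s → StandardTab ν t →
    (∀ k, 1 ≤ k → k ≤ n → contOfR ξ ξinv Q (s k) = contOfR ξ ξinv Q (t k)) →
    ∀ k, 1 ≤ k → k ≤ n → s k = t k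

/-! ## Residues, degrees and the quiver combinatorics -/

/-- The residue of a node: `c - r + κ_l (mod e)`. -/
def resOf (e : ℕ) (κ : ℕ → ℤ) (x : Node) : ZMod e :=
  (((x.2.2 : ℤ) - (x.2.1 : ℤ) + κ x.1 : ℤ) : ZMod e)

/-- The entries of the Cartan matrix of the quiver `Γ_e`. -/
def cartanInt (e : ℕ) (i j : ZMod e) : ℤ :=
  (if i = j then 2 else 0) + (if j = i + 1 ∧ i ≠ j then -1 else 0) +
    (if j = i - 1 ∧ i ≠ j then -1 else 0)

/-- `x` is an addable node of the shape with row lengths `f` (with `ℓ` components). -/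
def AddableNode (f : ℕ → ℕ → ℕ) (ℓ : ℕ) (x : Node) : Prop :=
  x.1 < ℓ ∧ x.2.2 = f x.1 x.2.1 ∧ (x.2.1 = 0 ∨ x.2.2 < f x.1 (x.2.1 - 1))

/-- `x` is a removable node of the shape with row lengths `f`. -/
def RemovableNode (f : ℕ → ℕ → ℕ) (ℓ : ℕ) (x : Node) : Prop :=
  x.1 < ℓ ∧ x.2.2 + 1 = f x.1 x.2.1 ∧ f x.1 (x.2.1 + 1) ≤ x.2.2

/-- `x` is strictly below `y`. -/
def Below (x y : Node) : Prop := y.1 < x.1 ∨ (x.1 = y.1 ∧ y.2.1 < x.2.1)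

/-- A finite region containing all relevant nodes. -/
def nodeRegion (ℓ n : ℕ) : Finset Node :=
  (Finset.range ℓ) ×ˢ (Finset.range (n + 1)) ×ˢ (Finset.range (n + 1))

/-- `d_A(μ) = #{addable i-nodes below A} - #{removable i-nodes below A}` (same residue). -/
def dBelow (e ℓ n : ℕ) (κ : ℕ → ℤ) (f : ℕ → ℕ → ℕ) (A : Node) : ℤ :=
  ((((nodeRegion ℓ n).filter fun x =>
      AddableNode f ℓ x ∧ resOf e κ x = resOf e κ A ∧ Below x A).card : ℤ)) -
  (((nodeRegion ℓ n).filter fun x =>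
      RemovableNode f ℓ x ∧ resOf e κ x = resOf e κ A ∧ Below x A).card : ℤ)

/-- `d^A(μ)`: the same with "above" in place of "below". -/
def dAbove (e ℓ n : ℕ) (κ : ℕ → ℤ) (f : ℕ → ℕ → ℕ) (A : Node) : ℤ :=
  ((((nodeRegion ℓ n).filter fun x =>
      AddableNode f ℓ x ∧ resOf e κ x = resOf e κ A ∧ Below A x).card : ℤ)) -
  (((nodeRegion ℓ n).filter fun x =>
      RemovableNode f ℓ x ∧ resOf e κ x = resOf e κ A ∧ Below A x).card : ℤ)

/-- The shape (row-length function) of the subtableau of `pos` on entries `1,…,m`. -/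
def subShape (pos : ℕ → Node) (m : ℕ) : ℕ → ℕ → ℕ := fun l r => cnt pos m l r

/-- The Brundan–Kleshchev–Wang degree of a standard tableau. -/
def degTab (e ℓ n : ℕ) (κ : ℕ → ℤ) (pos : ℕ → Node) : ℤ :=
  ∑ k ∈ Finset.range n, dBelow e ℓ n κ (subShape pos k) (pos (k + 1))

/-- The codegree of a standard tableau. -/
def codegTab (e ℓ n : ℕ) (κ : ℕ → ℤ) (pos : ℕ → Node) : ℤ :=
  ∑ k ∈ Finset.range n, dAbove e ℓ n κ (subShape pos k) (pos (k + 1))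

/-- `(Λ, β)` where `β = Σ_k α_{res(k)}` for the residue sequence of `pos`. -/
def lamBeta (e ℓ n : ℕ) (κ : ℕ → ℤ) (pos : ℕ → Node) : ℤ :=
  ∑ k ∈ Finset.range n,
    (((Finset.range ℓ).filter fun l => ((κ l : ZMod e)) = resOf e κ (pos (k + 1))).card : ℤ)

/-- `(β, β)` for `β = Σ_k α_{res(k)}`. -/
def betaBeta (e ℓ n : ℕ) (κ : ℕ → ℤ) (pos : ℕ → Node) : ℤ :=
  ∑ j ∈ Finset.range n, ∑ k ∈ Finset.range n,
    cartanInt e (resOf e κ (pos (j + 1))) (resOf e κ (pos (k + 1)))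

/-- The defect `(Λ, β) - (β, β)/2` of the block containing `pos`. -/
def defectOf (e ℓ n : ℕ) (κ : ℕ → ℤ) (pos : ℕ → Node) : ℤ :=
  lamBeta e ℓ n κ pos - betaBeta e ℓ n κ pos / 2

/-- The conjugate of a node (for a shape with `ℓ` components). -/
def conjNode (ℓ : ℕ) (x : Node) : Node := (ℓ - 1 - x.1, x.2.2, x.2.1)

/-- The sequence obtained by swapping places `s` and `s+1`. -/
def swapSeq {e : ℕ} (s : ℕ) (i : ℕ → ZMod e) : ℕ → ZMod e :=
  fun k => if k = s then i (s + 1) else if k = s + 1 then i s else i k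


/-- The cyclotomic quiver Hecke (KLR) algebra `R_n^Λ` of type `Γ_e`: an `R`-algebra `A`
with generators satisfying the KLR relations, together with its grading and the graded
anti-involution fixing the generators.  Idempotents are indexed by residue sequences
`i : ℕ → ZMod e` (only the values at `1,…,n` matter); `Λm j = (Λ, α_j)`. -/
structure KLR (R : Type*) [CommRing R] (A : Type*) [Ring A] [Algebra R A]
    (e n : ℕ) (Λm : ZMod e → ℕ) where
  E : (ℕ → ZMod e) → A
  Y : ℕ → A
  Psi : ℕ → A
  star : A →ₗ[R] A
  GS : ℤ → Submodule R A
  E_ext : ∀ i j : ℕ → ZMod e, (∀ k, 1 ≤ k → k ≤ n → i k = j k) → E i = E j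
  orth : ∀ i j : ℕ → ZMod e,
      E i * E j = if (∀ k, 1 ≤ k → k ≤ n → i k = j k) then E i else 0
  sumE : ∀ S : Finset (ℕ → ZMod e),
      (∀ j ∈ S, ∀ j' ∈ S, (∀ k, 1 ≤ k → k ≤ n → j k = j' k) → j = j') →
      (∀ i : ℕ → ZMod e, ∃ j ∈ S, ∀ k, 1 ≤ k → k ≤ n → i k = j k) →
      ∑ j ∈ S, E j = 1
  cyc : ∀ i : ℕ → ZMod e, Y 1 ^ (Λm (i 1)) * E i = 0
  YE : ∀ (i : ℕ → ZMod e) (r : ℕ), Y r * E i = E i * Y r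
  PsiE : ∀ (i : ℕ → ZMod e) (s : ℕ), Psi s * E i = E (swapSeq s i) * Psi s
  YY : ∀ r s, Y r * Y s = Y s * Y r
  PsiY : ∀ r s, 1 ≤ s → s < n → r ≠ s → r ≠ s + 1 → Psi s * Y r = Y r * Psi s
  PsiPsi : ∀ r s, r + 1 < s ∨ s + 1 < r → Psi r * Psi s = Psi s * Psi r
  PsiYE : ∀ (i : ℕ → ZMod e) (r : ℕ), 1 ≤ r → r < n →
      Psi r * Y (r + 1) * E i =
        (if i r = i (r + 1) then Y r * Psi r + 1 else Y r * Psi r) * E i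
  YPsiE : ∀ (i : ℕ → ZMod e) (r : ℕ), 1 ≤ r → r < n →
      Y (r + 1) * Psi r * E i =
        (if i r = i (r + 1) then Psi r * Y r + 1 else Psi r * Y r) * E i
  PsiSq : ∀ (i : ℕ → ZMod e) (r : ℕ), 1 ≤ r → r < n →
      Psi r * Psi r * E i =
        if i r = i (r + 1) then 0
        else if i (r + 1) ≠ i r + 1 ∧ i (r + 1) ≠ i r - 1 then E i
        else if e ≠ 2 ∧ i (r + 1) = i r + 1 then (Y (r + 1) - Y r) * E i
        else if e ≠ 2 ∧ i (r + 1) = i r - 1 then (Y r - Y (r + 1)) * E i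
        else (Y (r + 1) - Y r) * (Y r - Y (r + 1)) * E i
  braid : ∀ (i : ℕ → ZMod e) (r : ℕ), 1 ≤ r → r + 1 < n →
      Psi r * Psi (r + 1) * Psi r * E i =
        (if e ≠ 2 ∧ i (r + 2) = i r ∧ i (r + 1) = i r + 1 then
            Psi (r + 1) * Psi r * Psi (r + 1) + 1
         else if e ≠ 2 ∧ i (r + 2) = i r ∧ i r = i (r + 1) + 1 then
            Psi (r + 1) * Psi r * Psi (r + 1) - 1
         else if e = 2 ∧ i (r + 2) = i r ∧ i r = i (r + 1) + 1 then
            Psi (r + 1) * Psi r * Psi (r + 1) + Y r - Y (r + 1) - Y (r + 1) + Y (r + 2)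
         else Psi (r + 1) * Psi r * Psi (r + 1)) * E i
  star_mul : ∀ a b, star (a * b) = star b * star a
  star_E : ∀ i, star (E i) = E i
  star_Y : ∀ r, star (Y r) = Y r
  star_Psi : ∀ s, star (Psi s) = Psi s
  E_mem : ∀ i, E i ∈ GS 0
  Y_mem : ∀ r, Y r ∈ GS 2
  Psi_mem : ∀ (i : ℕ → ZMod e) (s : ℕ), Psi s * E i ∈ GS (-(cartanInt e (i s) (i (s + 1))))
  GS_mul : ∀ (d d' : ℤ) (a b : A), a ∈ GS d → b ∈ GS d' → a * b ∈ GS (d + d')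

namespace KLR

variable {R : Type*} [CommRing R] {A : Type*} [Ring A] [Algebra R A]
  {e n : ℕ} {Λm : ZMod e → ℕ}

/-- `ψ_{i₁} ⋯ ψ_{i_k}` for a (reduced) word. -/
def psiWord (Kk : KLR R A e n Λm) (L : List ℕ) : A := (L.map Kk.Psi).prod

/-- The residue sequence of a tableau. -/
def resSeq (e : ℕ) (κ : ℕ → ℤ) (pos : ℕ → Node) : ℕ → ZMod e := fun k => resOf e κ (pos k)

/-- The monomial `y_μ = y_1^{d_1} ⋯ y_n^{d_n}` of Hu–Mathas, where `tpos = t^μ` and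
`d_m = d_{A_m}(μ_m)`. -/
def yMu (Kk : KLR R A e n Λm) (ℓ : ℕ) (κ : ℕ → ℤ) (tpos : ℕ → Node) : A :=
  ((List.range n).map fun m0 =>
    Kk.Y (m0 + 1) ^ (dBelow e ℓ n κ (subShape tpos m0) (tpos (m0 + 1))).toNat).prod

/-- The monomial `y'_μ = y_1^{d'_1} ⋯ y_n^{d'_n}`, computed from `t_{μ'}`, the conjugate
of `tpos = t^μ`, with `d'_m = d^{A'_m}(μ'_m)`. -/
def yMu' (Kk : KLR R A e n Λm) (ℓ : ℕ) (κ : ℕ → ℤ) (tpos : ℕ → Node) : A :=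
  ((List.range n).map fun m0 =>
    Kk.Y (m0 + 1) ^
      (dAbove e ℓ n κ (subShape (fun k => conjNode ℓ (tpos k)) m0)
        (conjNode ℓ (tpos (m0 + 1)))).toNat).prod

/-- The Hu–Mathas basis element `ψ_{st} = ψ_{d(s)}^⋆ e_μ y_μ ψ_{d(t)}`, where `tpos = t^μ`
and `ws, wt` are the chosen reduced words for `d(s), d(t)`. -/
def psiST (Kk : KLR R A e n Λm) (ℓ : ℕ) (κ : ℕ → ℤ) (tpos : ℕ → Node)
    (ws wt : List ℕ) : A :=
  Kk.star (Kk.psiWord ws) * Kk.E (resSeq e κ tpos) * Kk.yMu ℓ κ tpos * Kk.psiWord wt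

/-- The dual basis element `ψ'_{st} = ψ_{d(s)}^⋆ e'_μ y'_μ ψ_{d(t)}`, where
`e'_μ = e(res(t_{μ'}))` and `t_{μ'}` is the conjugate of `tpos = t^μ`. -/
def psiST' (Kk : KLR R A e n Λm) (ℓ : ℕ) (κ : ℕ → ℤ) (tpos : ℕ → Node)
    (ws wt : List ℕ) : A :=
  Kk.star (Kk.psiWord ws) * Kk.E (resSeq e κ fun k => conjNode ℓ (tpos k)) *
    Kk.yMu' ℓ κ tpos * Kk.psiWord wt

end KLR


/-!
Write `a = d(v) i`. As `t^ν` is the row reading tableau, `d(v) i < d(v) (i + 1)` exactly when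
`i` precedes `i + 1` in the reading order of `v`.

If `v s_i` is not row standard, `i` and `i + 1` are neighbours in a row of `v`, so
`d(v) (i + 1) = a + 1`, `s_a ∈ S_ν` and `d(v) s_i = s_a d(v)` with lengths adding. Then
`x_ν T_{d(v)} T_i = x_ν T_a T_{d(v)} = ξ x_ν T_{d(v)}`, because in `x_ν (T_a - ξ)` the terms of
`w` and `w s_a` cancel.

If `v s_i` is row standard, `i` and `i + 1` lie in different rows, and dominance fixes which row
comes first: if `i + 1` were in an earlier row than `i`, counting the entries `≤ i` in the rows up
to that of `i + 1` would show that `v` does not dominate `v s_i`. So `ℓ(d(v) s_i) = ℓ(d(v)) ± 1`,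
and the formulas follow from `T_{w s_i} = T_w T_i` and the quadratic relation.
-/

section Permutations

@[simp] lemma swapP_apply_left (i : ℕ) : swapP i i = i + 1 := Equiv.swap_apply_left _ _

@[simp] lemma swapP_apply_right (i : ℕ) : swapP i (i + 1) = i := Equiv.swap_apply_right _ _

lemma swapP_apply_of_ne {i k : ℕ} (h₁ : k ≠ i) (h₂ : k ≠ i + 1) : swapP i k = k :=
  Equiv.swap_apply_of_ne_of_ne h₁ h₂

@[simp] lemma swapP_symm (i : ℕ) : (swapP i).symm = swapP i := Equiv.symm_swap _ _

@[simp] lemma mul_swapP_mul_swapP (w : Equiv.Perm ℕ) (i : ℕ) : w * swapP i * swapP i = w := by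
  rw [mul_assoc, swapP, Equiv.swap_mul_self, mul_one]

lemma swapP_lt_swapP_iff {i p q : ℕ} (h₁ : ¬(p = i ∧ q = i + 1)) (h₂ : ¬(p = i + 1 ∧ q = i)) :
    swapP i p < swapP i q ↔ p < q := by
  simp only [swapP, Equiv.swap_apply_def]
  split_ifs <;> omega

lemma FixesOutside.apply_mem {w : Equiv.Perm ℕ} {a b : ℕ} (hw : FixesOutside w a b) {k : ℕ}
    (hk : k ∈ Finset.Icc a b) : w k ∈ Finset.Icc a b := by
  by_contra hwk
  have : w (w k) = w k := hw _ (by simp only [Finset.mem_Icc] at hwk; omega)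
  rw [w.injective this] at hwk
  exact hwk hk

lemma FixesOutside.inv {w : Equiv.Perm ℕ} {a b : ℕ} (hw : FixesOutside w a b) :
    FixesOutside w⁻¹ a b := fun k hk => by
  rw [Equiv.Perm.inv_eq_iff_eq, hw k hk]

lemma FixesOutside.apply_mem_iff {w : Equiv.Perm ℕ} {a b : ℕ} (hw : FixesOutside w a b)
    {k : ℕ} : w k ∈ Finset.Icc a b ↔ k ∈ Finset.Icc a b :=
  ⟨fun h => by simpa using hw.inv.apply_mem h, hw.apply_mem⟩

lemma FixesOutside.mul {u w : Equiv.Perm ℕ} {a b : ℕ} (hu : FixesOutside u a b)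
    (hw : FixesOutside w a b) : FixesOutside (u * w) a b := fun k hk => by
  rw [Equiv.Perm.mul_apply, hw k hk, hu k hk]

lemma fixesOutside_swapP {i n : ℕ} (hi₁ : 1 ≤ i) (hi₂ : i < n) : FixesOutside (swapP i) 1 n :=
  fun k hk => swapP_apply_of_ne (by omega) (by omega)

lemma eq_one_of_forall_lt_apply_succ {n : ℕ} {d : Equiv.Perm ℕ} (hd : FixesOutside d 1 n)
    (hasc : ∀ i, 1 ≤ i → i < n → d i < d (i + 1)) : d = 1 := by
  have hmem : ∀ k, 1 ≤ k → k ≤ n → 1 ≤ d k ∧ d k ≤ n := fun k hk₁ hk₂ => by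
    simpa using hd.apply_mem (Finset.mem_Icc.2 ⟨hk₁, hk₂⟩)
  have hge : ∀ k, 1 ≤ k → k ≤ n → k ≤ d k := by
    intro k hk
    induction k, hk using Nat.le_induction with
    | base => exact fun h => (hmem 1 le_rfl h).1
    | succ k hk ih =>
      intro h
      have := hasc k hk (by omega)
      have := ih (by omega)
      omega
  have hle : ∀ j k, k + j = n → 1 ≤ k → d k ≤ k := by
    intro j
    induction j with
    | zero =>
      intro k hk h
      have := hmem k h (by omega)
      omega
    | succ j ih =>
      intro k hk h
      have := hasc k h (by omega)
      have := ih (k + 1) (by omega) (by omega)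
      omega
  ext k
  rw [Equiv.Perm.one_apply]
  by_cases hk : 1 ≤ k ∧ k ≤ n
  · have := hge k hk.1 hk.2
    have := hle (n - k) k (by omega) hk.1
    omega
  · exact hd k (by omega)

end Permutations

section Length

def inversions (n : ℕ) (w : Equiv.Perm ℕ) : Finset (ℕ × ℕ) :=
  ((Finset.Icc 1 n) ×ˢ (Finset.Icc 1 n)).filter fun p => p.1 < p.2 ∧ w p.2 < w p.1

lemma permLength_eq_card_inversions (n : ℕ) (w : Equiv.Perm ℕ) :
    permLength n w = (inversions n w).card := rfl

lemma mem_inversions {n : ℕ} {w : Equiv.Perm ℕ} {p q : ℕ} :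
    (p, q) ∈ inversions n w ↔
      (p ∈ Finset.Icc 1 n ∧ q ∈ Finset.Icc 1 n) ∧ p < q ∧ w q < w p := by
  simp only [inversions, Finset.mem_filter, Finset.mem_product]

lemma permLength_one (n : ℕ) : permLength n 1 = 0 := by
  rw [permLength_eq_card_inversions, Finset.card_eq_zero, Finset.eq_empty_iff_forall_notMem]
  rintro ⟨p, q⟩
  rw [mem_inversions, Equiv.Perm.one_apply, Equiv.Perm.one_apply]
  omega

lemma permLength_mul_swapP_of_lt {n i : ℕ} (hi₁ : 1 ≤ i) (hi₂ : i < n) {w : Equiv.Perm ℕ}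
    (h : w i < w (i + 1)) : permLength n (w * swapP i) = permLength n w + 1 := by
  have hs := fixesOutside_swapP hi₁ hi₂
  let φ : ℕ × ℕ ≃ ℕ × ℕ := (swapP i).prodCongr (swapP i)
  -- apart from `(i, i + 1)`, the inversions of `w * s_i` are those of `w` with `s_i` applied
  have hinv : inversions n (w * swapP i) =
      insert (i, i + 1) ((inversions n w).map φ.toEmbedding) := by
    ext ⟨p, q⟩
    simp only [Finset.mem_insert, Finset.mem_map_equiv, Prod.mk.injEq, φ, Equiv.prodCongr_symm,
      Equiv.prodCongr_apply, Prod.map, swapP_symm, mem_inversions, Equiv.Perm.mul_apply,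
      hs.apply_mem_iff]
    by_cases h₁ : p = i ∧ q = i + 1
    · obtain ⟨rfl, rfl⟩ := h₁
      simp only [swapP_apply_left, swapP_apply_right, Finset.mem_Icc, and_self, true_or,
        iff_true]
      omega
    by_cases h₂ : p = i + 1 ∧ q = i
    · obtain ⟨rfl, rfl⟩ := h₂
      simp only [swapP_apply_left, swapP_apply_right]
      omega
    rw [swapP_lt_swapP_iff h₁ h₂]
    tauto
  rw [permLength_eq_card_inversions, hinv, Finset.card_insert_of_notMem, Finset.card_map]
  · rfl
  simp only [Finset.mem_map_equiv, φ, Equiv.prodCongr_symm, Equiv.prodCongr_apply, Prod.map,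
    swapP_symm, swapP_apply_left, swapP_apply_right, mem_inversions]
  omega

lemma permLength_swapP {n a : ℕ} (ha₁ : 1 ≤ a) (ha₂ : a < n) : permLength n (swapP a) = 1 := by
  simpa [permLength_one] using permLength_mul_swapP_of_lt (n := n) (w := 1) ha₁ ha₂ (by simp)

lemma permLength_mul_swapP_le (n : ℕ) {i : ℕ} (hi₁ : 1 ≤ i) (hi₂ : i < n) (w : Equiv.Perm ℕ) :
    permLength n (w * swapP i) ≤ permLength n w + 1 := by
  rcases lt_or_gt_of_ne (w.injective.ne (Nat.ne_add_one i)) with h | h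
  · exact (permLength_mul_swapP_of_lt hi₁ hi₂ h).le
  · have := permLength_mul_swapP_of_lt (w := w * swapP i) hi₁ hi₂ (by simpa using h)
    rw [mul_swapP_mul_swapP] at this
    omega

lemma induction_mul_swapP {n : ℕ} {P : Equiv.Perm ℕ → Prop} (one : P 1)
    (mul_swapP : ∀ d i, 1 ≤ i → i < n → FixesOutside d 1 n → d i < d (i + 1) →
      P d → P (d * swapP i)) :
    ∀ d, FixesOutside d 1 n → P d := by
  intro d
  induction hm : permLength n d using Nat.strong_induction_on generalizing d with
  | _ m ih =>
    intro hd
    by_cases hdes : ∃ i, 1 ≤ i ∧ i < n ∧ d (i + 1) < d i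
    · obtain ⟨i, hi₁, hi₂, hlt⟩ := hdes
      have hd' : FixesOutside (d * swapP i) 1 n := hd.mul (fixesOutside_swapP hi₁ hi₂)
      have hlt' : (d * swapP i) i < (d * swapP i) (i + 1) := by simpa using hlt
      have hlen := permLength_mul_swapP_of_lt hi₁ hi₂ hlt'
      rw [mul_swapP_mul_swapP] at hlen
      simpa using mul_swapP _ i hi₁ hi₂ hd' hlt' (ih _ (by omega) _ rfl hd')
    · push Not at hdes
      rw [eq_one_of_forall_lt_apply_succ hd fun i hi₁ hi₂ =>
        (hdes i hi₁ hi₂).lt_of_ne (d.injective.ne (Nat.ne_add_one i))]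
      exact one

lemma permLength_mul_le (n : ℕ) (u : Equiv.Perm ℕ) {d : Equiv.Perm ℕ} (hd : FixesOutside d 1 n) :
    permLength n (u * d) ≤ permLength n u + permLength n d := by
  refine induction_mul_swapP (P := fun d => ∀ u, permLength n (u * d) ≤ permLength n u +
    permLength n d) (by simp [permLength_one]) ?_ d hd u
  intro d i hi₁ hi₂ _ hlt ih u
  rw [permLength_mul_swapP_of_lt hi₁ hi₂ hlt, ← mul_assoc]
  have := permLength_mul_swapP_le n hi₁ hi₂ (u * d)
  have := ih u
  omega

end Length

section YoungSubgroup

lemma youngMem_finite (n : ℕ) (tpos : ℕ → Node) :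
    {w : Equiv.Perm ℕ | YoungMem n tpos w}.Finite := by
  refine (Set.finite_range
    (Equiv.Perm.ofSubtype : Equiv.Perm (Finset.Icc 1 n) →* Equiv.Perm ℕ)).subset fun w hw => ?_
  exact ⟨w.subtypePerm fun k => hw.1.apply_mem_iff,
    Equiv.Perm.ofSubtype_subtypePerm _ fun k hk => by
      by_contra hk'
      exact hk (hw.1 k (by simp only [Finset.mem_Icc] at hk'; omega))⟩

lemma YoungMem.mul {n : ℕ} {tpos : ℕ → Node} {u w : Equiv.Perm ℕ} (hu : YoungMem n tpos u)
    (hw : YoungMem n tpos w) : YoungMem n tpos (u * w) := by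
  refine ⟨hu.1.mul hw.1, fun k hk₁ hk₂ => ?_⟩
  have hwk := Finset.mem_Icc.1 (hw.1.apply_mem (Finset.mem_Icc.2 ⟨hk₁, hk₂⟩))
  rw [Equiv.Perm.mul_apply, (hu.2 _ hwk.1 hwk.2).1, (hu.2 _ hwk.1 hwk.2).2]
  exact hw.2 k hk₁ hk₂

lemma youngMem_swap {n : ℕ} {tpos : ℕ → Node} {a b : ℕ} (ha : a ∈ Finset.Icc 1 n)
    (hb : b ∈ Finset.Icc 1 n) (hcomp : (tpos a).1 = (tpos b).1)
    (hrow : (tpos a).2.1 = (tpos b).2.1) : YoungMem n tpos (Equiv.swap a b) := by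
  rw [Finset.mem_Icc] at ha hb
  refine ⟨fun k hk => Equiv.swap_apply_of_ne_of_ne (by omega) (by omega), fun k _ _ => ?_⟩
  rw [Equiv.swap_apply_def]
  split_ifs with h₁ h₂ <;> subst_vars <;> simp [hcomp, hrow]

end YoungSubgroup

namespace Hecke

variable {R : Type*} [CommRing R] {A : Type*} [Ring A] [Algebra R A]
  {n ℓ : ℕ} {ξ : R} {Q : ℕ → R} (h : Hecke R A n ℓ ξ Q)

lemma Tw_mul_Tw (u : Equiv.Perm ℕ) {d : Equiv.Perm ℕ} (hd : FixesOutside d 1 n)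
    (hlen : permLength n (u * d) = permLength n u + permLength n d) :
    h.Tw (u * d) = h.Tw u * h.Tw d := by
  refine induction_mul_swapP (P := fun d => ∀ u, permLength n (u * d) = permLength n u +
    permLength n d → h.Tw (u * d) = h.Tw u * h.Tw d) (by simp [h.Tw_one]) ?_ d hd u hlen
  intro d i hi₁ hi₂ hd hlt ih u hlen
  rw [permLength_mul_swapP_of_lt hi₁ hi₂ hlt, ← mul_assoc] at hlen
  have hle := permLength_mul_swapP_le n hi₁ hi₂ (u * d)
  have hsub := permLength_mul_le n u hd
  rw [← mul_assoc, h.Tw_mul _ i hi₁ hi₂ (by omega), ih u (by omega),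
    h.Tw_mul _ i hi₁ hi₂ (by rw [permLength_mul_swapP_of_lt hi₁ hi₂ hlt]; omega), mul_assoc]

lemma Tw_mul_swapP_of_lt {i : ℕ} (hi₁ : 1 ≤ i) (hi₂ : i < n) {w : Equiv.Perm ℕ}
    (hw : w i < w (i + 1)) : h.Tw (w * swapP i) = h.Tw w * h.T i :=
  h.Tw_mul w i hi₁ hi₂ (by rw [permLength_mul_swapP_of_lt hi₁ hi₂ hw]; omega)

lemma Tw_swapP {a : ℕ} (ha₁ : 1 ≤ a) (ha₂ : a < n) : h.Tw (swapP a) = h.T a := by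
  simpa [h.Tw_one] using
    h.Tw_mul 1 a ha₁ ha₂ (by simp [permLength_one, permLength_swapP ha₁ ha₂])

lemma mul_T_mul_T {i : ℕ} (hi₁ : 1 ≤ i) (hi₂ : i < n) (X : A) :
    X * h.T i * h.T i = ξ • X + (ξ - 1) • (X * h.T i) := by
  have hc : h.T i * algebraMap R A ξ = ξ • h.T i := by
    rw [← Algebra.commutes, Algebra.smul_def]
  have hsq : h.T i * h.T i = (ξ - 1) • h.T i + algebraMap R A ξ := by
    have hexp : h.T i * h.T i = (h.T i + 1) * (h.T i - algebraMap R A ξ) +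
        h.T i * algebraMap R A ξ - h.T i + algebraMap R A ξ := by noncomm_ring
    rw [hexp, h.quad i hi₁ hi₂, hc, sub_smul, one_smul]
    abel
  rw [mul_assoc, hsq, mul_add, mul_smul_comm, ← Algebra.commutes, ← Algebra.smul_def]
  abel

lemma Tw_mul_T_add_Tw_mul_swapP_mul_T {a : ℕ} (ha₁ : 1 ≤ a) (ha₂ : a < n) (w : Equiv.Perm ℕ) :
    h.Tw w * h.T a + h.Tw (w * swapP a) * h.T a = ξ • (h.Tw w + h.Tw (w * swapP a)) := by
  wlog hlt : w a < w (a + 1) generalizing w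
  · have hgt : (w * swapP a) a < (w * swapP a) (a + 1) := by
      have := w.injective.ne (Nat.ne_add_one a)
      simp only [Equiv.Perm.mul_apply, swapP_apply_left, swapP_apply_right]
      omega
    simpa only [mul_swapP_mul_swapP, add_comm] using this (w * swapP a) hgt
  rw [h.Tw_mul_swapP_of_lt ha₁ ha₂ hlt, h.mul_T_mul_T ha₁ ha₂]
  module

lemma xElt_eq_sum (tpos : ℕ → Node) :
    h.xElt tpos = ∑ w ∈ (youngMem_finite n tpos).toFinset, h.Tw w :=
  finsum_mem_eq_finite_toFinset_sum _ _

lemma xElt_mul_T {tpos : ℕ → Node} {a : ℕ} (ha₁ : 1 ≤ a) (ha₂ : a < n)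
    (hsa : YoungMem n tpos (swapP a)) : h.xElt tpos * h.T a = ξ • h.xElt tpos := by
  rw [← sub_eq_zero, xElt_eq_sum, Finset.sum_mul, Finset.smul_sum, ← Finset.sum_sub_distrib]
  -- the terms of `w` and `w s_a` cancel in pairs
  refine Finset.sum_involution (fun w _ => w * swapP a) (fun w _ => ?_) (fun w _ _ he => ?_)
    (fun w hw => ?_) (fun w _ => mul_swapP_mul_swapP w a)
  · rw [sub_add_sub_comm, sub_eq_zero, ← smul_add]
    exact h.Tw_mul_T_add_Tw_mul_swapP_mul_T ha₁ ha₂ w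
  · simpa using DFunLike.congr_fun he a
  · simp only [Set.Finite.mem_toFinset, Set.mem_ofPred_eq] at hw ⊢
    exact hw.mul hsa

end Hecke

section Tableaux

variable {ℓ n : ℕ} {μ : Multicomp ℓ n}

def InEarlierRow (x y : Node) : Prop := x.1 < y.1 ∨ (x.1 = y.1 ∧ x.2.1 < y.2.1)

@[simp] lemma actTab_swapP_apply_left (v : ℕ → Node) (i : ℕ) :
    actTab v (swapP i) i = v (i + 1) := by
  simp [actTab]

@[simp] lemma actTab_swapP_apply_right (v : ℕ → Node) (i : ℕ) :
    actTab v (swapP i) (i + 1) = v i := by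
  simp [actTab]

@[simp] lemma actTab_swapP_swapP (v : ℕ → Node) (i : ℕ) :
    actTab (actTab v (swapP i)) (swapP i) = v := by
  funext k
  simp [actTab, swapP]

lemma IsTableau.actTab {v : ℕ → Node} {w : Equiv.Perm ℕ} (hv : IsTableau μ v)
    (hw : FixesOutside w 1 n) : IsTableau μ (actTab v w) := by
  have hmem : ∀ {k}, 1 ≤ k → k ≤ n → 1 ≤ w k ∧ w k ≤ n := fun hk₁ hk₂ => by
    simpa using hw.apply_mem (Finset.mem_Icc.2 ⟨hk₁, hk₂⟩)
  refine ⟨fun j k hj₁ hj₂ hk₁ hk₂ he => ?_, fun k hk₁ hk₂ => ?_, fun x hx => ?_⟩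
  · exact w.injective (hv.1 _ _ (hmem hj₁ hj₂).1 (hmem hj₁ hj₂).2 (hmem hk₁ hk₂).1
      (hmem hk₁ hk₂).2 he)
  · exact hv.2.1 _ (hmem hk₁ hk₂).1 (hmem hk₁ hk₂).2
  · obtain ⟨k, hk₁, hk₂, rfl⟩ := hv.2.2 x hx
    have := Finset.mem_Icc.1 (hw.inv.apply_mem (Finset.mem_Icc.2 ⟨hk₁, hk₂⟩))
    exact ⟨w⁻¹ k, this.1, this.2, by simp [SpechtInduction.actTab]⟩

lemma RowStandard.inEarlierRow_of_nodeLex {v : ℕ → Node} (hv : RowStandard μ v) {j k : ℕ}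
    (hj₁ : 1 ≤ j) (hj₂ : j ≤ n) (hk₁ : 1 ≤ k) (hk₂ : k ≤ n) (hjk : j < k)
    (hlex : nodeLex (v k) (v j)) : InEarlierRow (v k) (v j) := by
  rcases hlex with h | ⟨h₁, h | ⟨h₂, h₃⟩⟩
  · exact Or.inl h
  · exact Or.inr ⟨h₁, h⟩
  · exact absurd (hv.2 k j hk₁ hk₂ hj₁ hj₂ h₁ h₂ h₃) (by omega)

lemma RowStandard.actTab_swapP {v : ℕ → Node} (hv : RowStandard μ v) {i : ℕ} (hi₁ : 1 ≤ i)
    (hi₂ : i < n) (hdiff : ¬((v i).1 = (v (i + 1)).1 ∧ (v i).2.1 = (v (i + 1)).2.1)) :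
    RowStandard μ (actTab v (swapP i)) := by
  have hs := fixesOutside_swapP hi₁ hi₂
  refine ⟨hv.1.actTab hs, fun j k hj₁ hj₂ hk₁ hk₂ hcomp hrow hcol => ?_⟩
  have hsj := Finset.mem_Icc.1 (hs.apply_mem (Finset.mem_Icc.2 ⟨hj₁, hj₂⟩))
  have hsk := Finset.mem_Icc.1 (hs.apply_mem (Finset.mem_Icc.2 ⟨hk₁, hk₂⟩))
  have hlt := hv.2 _ _ hsj.1 hsj.2 hsk.1 hsk.2 hcomp hrow hcol
  by_contra hkj
  by_cases hpair : k = i ∧ j = i + 1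
  · obtain ⟨rfl, rfl⟩ := hpair
    simp only [actTab_swapP_apply_left, actTab_swapP_apply_right] at hcomp hrow
    exact hdiff ⟨hcomp, hrow⟩
  · have hne : j ≠ k := fun h => by subst h; omega
    have := (swapP_lt_swapP_iff (i := i) (p := k) (q := j) hpair (by omega)).2 (by omega)
    omega

lemma tabPsum_eq_card (pos : ℕ → Node) (m l j : ℕ) :
    tabPsum pos m l j = ((Finset.Icc 1 m).filter fun k => InEarlierRow (pos k) (l, j, 0)).card := by
  have hcnt : ∀ r, cnt pos m l r =
      (((Finset.Icc 1 m).filter fun k => (pos k).1 = l).filter fun k => (pos k).2.1 = r).card :=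
    fun r => by rw [cnt, Finset.filter_filter]
  simp only [tabPsum, compcnt, hcnt, Finset.sum_card_fiberwise_eq_card_filter, Finset.mem_range]
  rw [Finset.filter_filter,
    ← Finset.card_union_of_disjoint (Finset.disjoint_filter.2 fun k _ h₁ h₂ => by omega),
    ← Finset.filter_or]
  congr

lemma not_tabDominates_actTab_swapP {v : ℕ → Node} {i : ℕ} (hi₁ : 1 ≤ i) (hin : i ≤ n)
    (hrow : InEarlierRow (v (i + 1)) (v i)) : ¬ TabDominates n v (actTab v (swapP i)) := by
  intro hdom
  -- compare the numbers of entries `≤ i` lying in the row of `i + 1` or above it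
  have hy : InEarlierRow (v (i + 1)) ((v (i + 1)).1, (v (i + 1)).2.1 + 1, 0) :=
    Or.inr ⟨rfl, Nat.lt_succ_self _⟩
  have hy' : ¬ InEarlierRow (v i) ((v (i + 1)).1, (v (i + 1)).2.1 + 1, 0) := by
    simp only [InEarlierRow] at hrow ⊢
    omega
  have hle := hdom i (v (i + 1)).1 ((v (i + 1)).2.1 + 1) hi₁ hin
  rw [tabPsum_eq_card, tabPsum_eq_card] at hle
  refine hle.not_gt (Finset.card_lt_card ((Finset.ssubset_iff_of_subset fun k hk => ?_).2
    ⟨i, ?_, ?_⟩))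
  · rw [Finset.mem_filter] at hk ⊢
    refine ⟨hk.1, ?_⟩
    obtain rfl | hki := eq_or_ne k i
    · exact absurd hk.2 hy'
    · rw [actTab, swapP_apply_of_ne hki (by simp at hk; omega)]
      exact hk.2
  · simpa [hi₁] using hy
  · simp [hy']

end Tableaux

namespace IsDPerm

variable {ℓ n : ℕ} {ν : Multicomp ℓ n} {tnu v : ℕ → Node} {dv : Equiv.Perm ℕ}

lemma apply_mem (hdv : IsDPerm n tnu v dv) {k : ℕ} (hk₁ : 1 ≤ k) (hk₂ : k ≤ n) :
    1 ≤ dv k ∧ dv k ≤ n := by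
  simpa using hdv.1.apply_mem (Finset.mem_Icc.2 ⟨hk₁, hk₂⟩)

lemma lt_iff_nodeLex (htnu : IsRowReading ν tnu) (hdv : IsDPerm n tnu v dv) {j k : ℕ}
    (hj₁ : 1 ≤ j) (hj₂ : j ≤ n) (hk₁ : 1 ≤ k) (hk₂ : k ≤ n) :
    dv j < dv k ↔ nodeLex (v j) (v k) := by
  rw [hdv.2 j hj₁ hj₂, hdv.2 k hk₁ hk₂]
  exact htnu.2 _ _ (hdv.apply_mem hj₁ hj₂).1 (hdv.apply_mem hj₁ hj₂).2
    (hdv.apply_mem hk₁ hk₂).1 (hdv.apply_mem hk₁ hk₂).2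

lemma actTab_swapP (hdv : IsDPerm n tnu v dv) {i : ℕ} (hi₁ : 1 ≤ i) (hi₂ : i < n) :
    IsDPerm n tnu (actTab v (swapP i)) (dv * swapP i) := by
  have hs := fixesOutside_swapP hi₁ hi₂
  refine ⟨hdv.1.mul hs, fun k hk₁ hk₂ => ?_⟩
  have := Finset.mem_Icc.1 (hs.apply_mem (Finset.mem_Icc.2 ⟨hk₁, hk₂⟩))
  exact hdv.2 _ this.1 this.2

lemma lt_apply_succ_of_tabDominates (htnu : IsRowReading ν tnu) (hv : RowStandard ν v)
    (hdv : IsDPerm n tnu v dv) {i : ℕ} (hi₁ : 1 ≤ i) (hi₂ : i < n)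
    (hdom : TabDominates n v (actTab v (swapP i))) : dv i < dv (i + 1) := by
  have hi₂' : i + 1 ≤ n := hi₂
  by_contra hle
  have hlt : dv (i + 1) < dv i :=
    lt_of_le_of_ne (not_lt.1 hle) (dv.injective.ne (Nat.ne_add_one i).symm)
  have hlex := (hdv.lt_iff_nodeLex htnu (by omega) hi₂' hi₁ hi₂.le).1 hlt
  exact not_tabDominates_actTab_swapP hi₁ hi₂.le
    (hv.inEarlierRow_of_nodeLex hi₁ hi₂.le (by omega) hi₂' (Nat.lt_add_one i) hlex) hdom

lemma apply_succ_of_sameRow (htnu : IsRowReading ν tnu) (hv : RowStandard ν v)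
    (hdv : IsDPerm n tnu v dv) {i : ℕ} (hi₁ : 1 ≤ i) (hi₂ : i < n)
    (hcomp : (v i).1 = (v (i + 1)).1) (hrow : (v i).2.1 = (v (i + 1)).2.1) :
    dv (i + 1) = dv i + 1 := by
  have hi₂' : i + 1 ≤ n := hi₂
  have hlt : dv i < dv (i + 1) := by
    refine lt_of_le_of_ne (not_lt.1 fun hgt => ?_) (dv.injective.ne (Nat.ne_add_one i))
    have := hv.inEarlierRow_of_nodeLex hi₁ hi₂.le (by omega) hi₂' (Nat.lt_add_one i)
      ((hdv.lt_iff_nodeLex htnu (by omega) hi₂' hi₁ hi₂.le).1 hgt)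
    simp only [InEarlierRow] at this
    omega
  -- an entry `k` with `dv i < dv k < dv (i + 1)` would sit strictly between `i` and `i + 1`
  -- in their common row
  by_contra hne
  obtain ⟨k, hk₁, hk₂, hk⟩ : ∃ k, 1 ≤ k ∧ k ≤ n ∧ dv k = dv i + 1 := by
    have := (hdv.apply_mem hi₁ hi₂.le).1
    have := (hdv.apply_mem (by omega) hi₂').2
    have := Finset.mem_Icc.1 (hdv.1.inv.apply_mem (Finset.mem_Icc.2 (⟨by omega, by omega⟩ :
      1 ≤ dv i + 1 ∧ dv i + 1 ≤ n)))
    exact ⟨dv⁻¹ (dv i + 1), this.1, this.2, by simp⟩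
  have h₁ := (hdv.lt_iff_nodeLex htnu hi₁ hi₂.le hk₁ hk₂).1 (by omega)
  have h₂ := (hdv.lt_iff_nodeLex htnu hk₁ hk₂ (by omega) hi₂').1 (by omega)
  simp only [nodeLex] at h₁ h₂
  have hik := hv.2 i k hi₁ hi₂.le hk₁ hk₂ (by omega) (by omega) (by omega)
  have hki := hv.2 k (i + 1) hk₁ hk₂ (by omega) hi₂' (by omega) (by omega) (by omega)
  omega

end IsDPerm

lemma Hecke.xElt_mul_Tw_mul_T_of_sameRow {R : Type*} [CommRing R] {A : Type*} [Ring A]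
    [Algebra R A] {n ℓ : ℕ} {ξ : R} {Q : ℕ → R} (h : Hecke R A n ℓ ξ Q) {ν : Multicomp ℓ n}
    {tnu v : ℕ → Node} {dv : Equiv.Perm ℕ} (htnu : IsRowReading ν tnu) (hv : RowStandard ν v)
    (hdv : IsDPerm n tnu v dv) {i : ℕ} (hi₁ : 1 ≤ i) (hi₂ : i < n)
    (hcomp : (v i).1 = (v (i + 1)).1) (hrow : (v i).2.1 = (v (i + 1)).2.1) :
    h.xElt tnu * h.Tw dv * h.T i = ξ • (h.xElt tnu * h.Tw dv) := by
  have hsucc := hdv.apply_succ_of_sameRow htnu hv hi₁ hi₂ hcomp hrow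
  have ha := hdv.apply_mem hi₁ hi₂.le
  have hb := hdv.apply_mem (k := i + 1) (by omega) hi₂
  have hlt : dv i < dv (i + 1) := by omega
  have hconj : dv * swapP i = swapP (dv i) * dv := by
    rw [swapP, Equiv.mul_swap_eq_swap_mul, hsucc, swapP]
  have hyoung : YoungMem n tnu (swapP (dv i)) := by
    rw [swapP, ← hsucc]
    refine youngMem_swap (Finset.mem_Icc.2 ha) (Finset.mem_Icc.2 hb) ?_ ?_ <;>
      rwa [← hdv.2 i hi₁ hi₂.le, ← hdv.2 (i + 1) (by omega) hi₂]
  have hlen :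
      permLength n (swapP (dv i) * dv) = permLength n (swapP (dv i)) + permLength n dv := by
    rw [← hconj, permLength_mul_swapP_of_lt hi₁ hi₂ hlt, permLength_swapP ha.1 (by omega),
      add_comm]
  rw [mul_assoc, ← h.Tw_mul_swapP_of_lt hi₁ hi₂ hlt, hconj, h.Tw_mul_Tw _ hdv.1 hlen,
    h.Tw_swapP ha.1 (by omega), ← mul_assoc, h.xElt_mul_T ha.1 (by omega) hyoung,
    smul_mul_assoc]

theorem statement10_general {R : Type*} [CommRing R] {A : Type*} [Ring A]
    [Algebra R A] {n ℓ : ℕ} {ξ : R} {Q : ℕ → R} (h : Hecke R A n ℓ ξ Q)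
    (nu : Multicomp ℓ n) (tnu v : ℕ → Node) (htnu : IsRowReading nu tnu)
    (hv : RowStandard nu v) (dv : Equiv.Perm ℕ) (hdv : IsDPerm n tnu v dv)
    (i : ℕ) (hi1 : 1 ≤ i) (hi2 : i < n) :
    (¬ RowStandard nu (actTab v (swapP i)) →
      h.xElt tnu * h.Tw dv * h.T i = ξ • (h.xElt tnu * h.Tw dv)) ∧
    (RowStandard nu (actTab v (swapP i)) → TabDominates n v (actTab v (swapP i)) →
      (∃ k, 1 ≤ k ∧ k ≤ n ∧ actTab v (swapP i) k ≠ v k) →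
      h.xElt tnu * h.Tw dv * h.T i = h.xElt tnu * h.Tw (dv * swapP i)) ∧
    (RowStandard nu (actTab v (swapP i)) → TabDominates n (actTab v (swapP i)) v →
      (∃ k, 1 ≤ k ∧ k ≤ n ∧ actTab v (swapP i) k ≠ v k) →
      h.xElt tnu * h.Tw dv * h.T i =
        ξ • (h.xElt tnu * h.Tw (dv * swapP i)) + (ξ - 1) • (h.xElt tnu * h.Tw dv)) := by
  refine ⟨fun hns => ?_, fun _ hdom _ => ?_, fun hvs hdom _ => ?_⟩
  · obtain ⟨hcomp, hrow⟩ : (v i).1 = (v (i + 1)).1 ∧ (v i).2.1 = (v (i + 1)).2.1 :=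
      not_not.1 fun hdiff => hns (hv.actTab_swapP hi1 hi2 hdiff)
    exact h.xElt_mul_Tw_mul_T_of_sameRow htnu hv hdv hi1 hi2 hcomp hrow
  · rw [mul_assoc,
      h.Tw_mul_swapP_of_lt hi1 hi2 (hdv.lt_apply_succ_of_tabDominates htnu hv hi1 hi2 hdom)]
  · -- apply the previous case to `v s_i`, whose distinguished permutation is `d(v) s_i`
    have hlt := (hdv.actTab_swapP hi1 hi2).lt_apply_succ_of_tabDominates htnu hvs hi1 hi2
      (by rwa [actTab_swapP_swapP])
    rw [← mul_swapP_mul_swapP dv i, h.Tw_mul_swapP_of_lt hi1 hi2 hlt, mul_swapP_mul_swapP,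
      ← mul_assoc, h.mul_T_mul_T hi1 hi2]

/-- permutation module relations.  In the (Iwahori–)Hecke algebra,
`x_ν T_{d(v)} T_i` equals `ξ x_ν T_{d(v)}` if `v s_i` is not row standard;
`x_ν T_{d(v) s_i}` if `v ⊳ v s_i` is row standard; and
`ξ x_ν T_{d(v) s_i} + (ξ - 1) x_ν T_{d(v)}` if `v s_i ⊳ v` is row standard. -/
theorem statement10 {R : Type*} [CommRing R] [IsDomain R] {A : Type*} [Ring A]
    [Algebra R A] {n ℓ : ℕ} {ξ : R} {Q : ℕ → R} (h : Hecke R A n ℓ ξ Q)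
    (nu : Multicomp ℓ n) (tnu v : ℕ → Node) (htnu : IsRowReading nu tnu)
    (hv : RowStandard nu v) (dv : Equiv.Perm ℕ) (hdv : IsDPerm n tnu v dv)
    (i : ℕ) (hi1 : 1 ≤ i) (hi2 : i < n) :
    (¬ RowStandard nu (actTab v (swapP i)) →
      h.xElt tnu * h.Tw dv * h.T i = ξ • (h.xElt tnu * h.Tw dv)) ∧
    (RowStandard nu (actTab v (swapP i)) → TabDominates n v (actTab v (swapP i)) →
      (∃ k, 1 ≤ k ∧ k ≤ n ∧ actTab v (swapP i) k ≠ v k) →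
      h.xElt tnu * h.Tw dv * h.T i = h.xElt tnu * h.Tw (dv * swapP i)) ∧
    (RowStandard nu (actTab v (swapP i)) → TabDominates n (actTab v (swapP i)) v →
      (∃ k, 1 ≤ k ∧ k ≤ n ∧ actTab v (swapP i) k ≠ v k) →
      h.xElt tnu * h.Tw dv * h.T i =
        ξ • (h.xElt tnu * h.Tw (dv * swapP i)) + (ξ - 1) • (h.xElt tnu * h.Tw dv)) :=
  statement10_general h nu tnu v htnu hv dv hdv i hi1 hi2

end SpechtInduction
end
end

section
/- Let μ be a multipartition of n and i ∈ I. Let A_1,...,A_z be the addable i-nodes of μ listed from top to bottom, and α_j = μ ∪ {A_j} the corresponding multipartitions of n+1. Then α_1 ⊳ α_2 ⊳ ... ⊳ α_z in the dominance order. -/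
open scoped Classical

noncomputable section

namespace SpechtInduction

/-! Adding one node `A` to `μ` raises the row of `A` by one, hence raises every dominance
partial sum `psum l i` whose range of rows contains `A`, i.e. those with `(l, i, 0)` below
`A`. Since "below" is transitive, a lower node `B` raises a subset of the partial sums raised
by `A`, and the sum `psum A.1 (A.2.1 + 1)` is raised by `A` but not by `B`. -/

theorem List.sum_eq_sum_range_getD {M : Type*} [AddCommMonoid M] (L : List M) {N : ℕ}
    (hN : L.length ≤ N) : L.sum = ∑ r ∈ Finset.range N, L.getD r 0 := by
  induction L generalizing N with
  | nil => simp
  | cons a L ih =>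
    obtain ⟨N, rfl⟩ : ∃ N', N = N' + 1 := ⟨N - 1, by simp at hN; omega⟩
    rw [Finset.sum_range_succ', List.sum_cons, ih (by simpa using hN), add_comm]
    simp

theorem Below.trans {x y z : Node} (hxy : Below x y) (hyz : Below y z) : Below x z := by
  unfold Below at *
  omega

namespace Multicomp

variable {ℓ n m : ℕ} {mu : Multicomp ℓ n} {al : Multicomp ℓ m} {A : Node}

theorem compSize_eq_sum_rowLen (mu : Multicomp ℓ n) {l N : ℕ}
    (hN : (mu.parts.getD l []).length ≤ N) :
    mu.compSize l = ∑ r ∈ Finset.range N, mu.rowLen l r :=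
  List.sum_eq_sum_range_getD _ hN

theorem rowLen_of_mem_iff (hcol : A.2.2 = mu.rowLen A.1 A.2.1)
    (hal : ∀ x, al.mem x ↔ mu.mem x ∨ x = A) (l r : ℕ) :
    al.rowLen l r = mu.rowLen l r + if l = A.1 ∧ r = A.2.1 then 1 else 0 := by
  obtain ⟨a, p, q⟩ := A
  apply eq_of_forall_lt_iff
  intro c
  have hc := hal (l, r, c)
  simp only [mem, Prod.mk.injEq] at hc hcol
  rw [hc]
  split_ifs with h
  · obtain ⟨rfl, rfl⟩ := h
    omega
  · tauto

theorem compSize_of_mem_iff (hcol : A.2.2 = mu.rowLen A.1 A.2.1)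
    (hal : ∀ x, al.mem x ↔ mu.mem x ∨ x = A) (l : ℕ) :
    al.compSize l = mu.compSize l + if l = A.1 then 1 else 0 := by
  set N := max (mu.parts.getD l []).length (max (al.parts.getD l []).length (A.2.1 + 1))
  rw [mu.compSize_eq_sum_rowLen (N := N) (by omega),
    al.compSize_eq_sum_rowLen (N := N) (by omega)]
  simp only [rowLen_of_mem_iff hcol hal, Finset.sum_add_distrib]
  by_cases hl : l = A.1 <;> simp [hl, Finset.sum_ite_eq', N]

theorem psum_of_mem_iff (hcol : A.2.2 = mu.rowLen A.1 A.2.1)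
    (hal : ∀ x, al.mem x ↔ mu.mem x ∨ x = A) (l i : ℕ) :
    al.psum l i = mu.psum l i + if Below (l, i, 0) A then 1 else 0 := by
  unfold psum
  simp only [compSize_of_mem_iff hcol hal, rowLen_of_mem_iff hcol hal, Finset.sum_add_distrib]
  by_cases hl : l = A.1 <;> simp [hl, Finset.sum_ite_eq', Below] <;> split_ifs <;> omega

end Multicomp

theorem statement14_general {ℓ n : ℕ} (e : ℕ) (κ : ℕ → ℤ) (i : ZMod e)
    (mu : Multicomp ℓ n)
    (Aa Bb : Node)
    (hA : AddableNode mu.rowLen ℓ Aa ∧ resOf e κ Aa = i)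
    (hB : AddableNode mu.rowLen ℓ Bb ∧ resOf e κ Bb = i)
    (hbelow : Below Bb Aa)
    (alA alB : Multicomp ℓ (n + 1))
    (hAl : ∀ x, alA.mem x ↔ (mu.mem x ∨ x = Aa))
    (hBl : ∀ x, alB.mem x ↔ (mu.mem x ∨ x = Bb)) :
    alA.Dominates alB ∧ ¬ alB.Dominates alA := by
  have hAp := Multicomp.psum_of_mem_iff hA.1.2.1 hAl
  have hBp := Multicomp.psum_of_mem_iff hB.1.2.1 hBl
  refine ⟨fun l j => ?_, fun hdom => ?_⟩
  · have hsub : Below (l, j, 0) Bb → Below (l, j, 0) Aa := (Below.trans · hbelow)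
    rw [hAp, hBp]
    split_ifs <;> simp_all
  · have hgap := hdom Aa.1 (Aa.2.1 + 1)
    have hinA : Below (Aa.1, Aa.2.1 + 1, 0) Aa := Or.inr ⟨rfl, Nat.lt_succ_self _⟩
    have hnotB : ¬ Below (Aa.1, Aa.2.1 + 1, 0) Bb := by
      simp only [Below] at hbelow ⊢
      omega
    rw [hAp, hBp, if_pos hinA, if_neg hnotB] at hgap
    omega

/-- If the addable `i`-nodes of a multipartition `μ` are listed from
top to bottom, then adding them gives multipartitions of `n+1` that strictly decrease in
the dominance order: if `B` is below `A` then `μ ∪ {A} ⊳ μ ∪ {B}`. -/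
theorem statement14 {ℓ n : ℕ} (e : ℕ) (he : e ≠ 1) (κ : ℕ → ℤ) (i : ZMod e)
    (mu : Multicomp ℓ n) (hmu : mu.IsMultipartition)
    (Aa Bb : Node)
    (hA : AddableNode mu.rowLen ℓ Aa ∧ resOf e κ Aa = i)
    (hB : AddableNode mu.rowLen ℓ Bb ∧ resOf e κ Bb = i)
    (hbelow : Below Bb Aa)
    (alA alB : Multicomp ℓ (n + 1))
    (halA : alA.IsMultipartition) (halB : alB.IsMultipartition)
    (hAl : ∀ x, alA.mem x ↔ (mu.mem x ∨ x = Aa))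
    (hBl : ∀ x, alB.mem x ↔ (mu.mem x ∨ x = Bb)) :
    alA.Dominates alB ∧ ¬ alB.Dominates alA :=
  statement14_general e κ i mu Aa Bb hA hB hbelow alA alB hAl hBl

end SpechtInduction
end
end
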